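/- Let G be a connected graph of order n ≥ 2 and let H be a connected graph with at least two vertices such that ∂(H) = σ(H), and let v be a vertex of H. (i) If v ∈ ∂(H), then dim_s(G∘_v H) = n(|∂(H)| − 1) − 1. (ii) If v ∉ ∂(H), then dim_s(G∘_v H) = n|∂(H)| − 1. -/

import Mathlib

namespace RootedStrong

variable {V : Type*}

/-- `u` is maximally distant from `v`: every neighbor `w` of `u` satisfies `d(v,w) ≤ d(u,v)`. -/
def MaxDistant (G : SimpleGraph V) (u v : V) : Prop :=
  ∀ w, G.Adj u w → G.dist v w ≤ G.dist u v

/-- `u` and `v` are mutually maximally distant. -/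
def MMD (G : SimpleGraph V) (u v : V) : Prop :=
  MaxDistant G u v ∧ MaxDistant G v u

/-- The boundary `∂(G)` of a graph. -/
def boundary (G : SimpleGraph V) : Set V := {u | ∃ v, MMD G u v}

/-- A vertex is simplicial if its neighborhood induces a complete graph. -/
def Simplicial (G : SimpleGraph V) (u : V) : Prop :=
  ∀ x ∈ G.neighborSet u, ∀ y ∈ G.neighborSet u, x ≠ y → G.Adj x y

/-- The set `σ(G)` of simplicial vertices. -/
def simplicialSet (G : SimpleGraph V) : Set V := {u | Simplicial G u}

/-- `w` strongly resolves `u` and `v`. -/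
def StronglyResolves (G : SimpleGraph V) (w u v : V) : Prop :=
  G.dist w u = G.dist w v + G.dist v u ∨ G.dist w v = G.dist w u + G.dist u v

/-- A set of vertices is a strong metric generator if every pair of distinct vertices is
strongly resolved by some of its elements. -/
def IsStrongGenerator (G : SimpleGraph V) (S : Set V) : Prop :=
  ∀ u v : V, u ≠ v → ∃ w ∈ S, StronglyResolves G w u v

/-- The strong metric dimension of a graph. -/
noncomputable def sdim (G : SimpleGraph V) [Fintype V] : ℕ :=
  sInf {n | ∃ S : Finset V, S.card = n ∧ IsStrongGenerator G (S : Set V)}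

/-- A strong metric basis: a strong metric generator of minimum cardinality. -/
def IsStrongBasis (G : SimpleGraph V) [Fintype V] (S : Finset V) : Prop :=
  IsStrongGenerator G (S : Set V) ∧ S.card = sdim G

/-- The rooted product graph `G ∘_v H`. -/
def rootedProd {α β : Type*} (G : SimpleGraph α) (H : SimpleGraph β) (v : β) :
    SimpleGraph (α × β) where
  Adj p q := (p.1 = q.1 ∧ H.Adj p.2 q.2) ∨ (p.2 = v ∧ q.2 = v ∧ G.Adj p.1 q.1)
  symm := by
    constructor
    rintro ⟨a, x⟩ ⟨b, y⟩ (⟨h1, h2⟩ | ⟨h1, h2, h3⟩)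
    · exact Or.inl ⟨h1.symm, h2.symm⟩
    · exact Or.inr ⟨h2, h1, h3.symm⟩
  loopless := by
    constructor
    rintro ⟨a, x⟩ (⟨_, h2⟩ | ⟨_, _, h3⟩)
    · exact H.loopless.irrefl _ h2
    · exact G.loopless.irrefl _ h3

/-- Two distinct vertices are true twins if they have equal closed neighborhoods. -/
def TrueTwins (G : SimpleGraph V) (x y : V) : Prop :=
  x ≠ y ∧ ∀ z, (z = x ∨ G.Adj x z) ↔ (z = y ∨ G.Adj y z)

/-- A twin-free clique: a clique containing no pair of true twins. -/
def IsTwinFreeClique (G : SimpleGraph V) (X : Set V) : Prop :=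
  (∀ x ∈ X, ∀ y ∈ X, x ≠ y → G.Adj x y) ∧ ∀ x ∈ X, ∀ y ∈ X, ¬ TrueTwins G x y

/-- The twin-free clique number `ϖ(G)`. -/
noncomputable def twinFreeCliqueNum (G : SimpleGraph V) : ℕ :=
  sSup {n | ∃ X : Set V, IsTwinFreeClique G X ∧ X.ncard = n}


/-! The vertices maximally distant from some vertex are exactly the boundary vertices, and every
pair `u ≠ v` is strongly resolved by two distinct ones: climb from `u` past `v`, and from `v`
past `u`, until a maximally distant vertex is reached. Hence `∂(G)` minus any one vertex is a
strong metric generator. Conversely, a vertex resolving two mutually maximally distant vertices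
is one of them, so a generator misses at most one vertex of a set of pairwise mutually maximally
distant vertices. Simplicial vertices are maximally distant from every other vertex, so
`dim_s(G) = |∂(G)| - 1` whenever `∂(G) ⊆ σ(G)`.

In `G ∘_v H` a vertex `(a, x)` can only be maximally distant from another vertex if `x ≠ v` and
`x` is maximally distant from some vertex of `H`, while `(a, x)` is simplicial whenever `x` is
and `x ≠ v`. So if `∂(H) = σ(H)`, then `∂(G ∘_v H) = V(G) × (∂(H) \ {v})` consists of simplicial
vertices, and `dim_s(G ∘_v H) = n |∂(H) \ {v}| - 1`. -/

open SimpleGraph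

section Boundary

variable {V : Type*} {G : SimpleGraph V}

lemma exists_adj_dist_add_one_eq (hG : G.Connected) {x y : V} (hxy : x ≠ y) :
    ∃ p, G.Adj x p ∧ G.dist y p + 1 = G.dist y x := by
  obtain ⟨w, hw⟩ := hG.exists_walk_length_eq_dist x y
  cases w with
  | nil => exact absurd rfl hxy
  | @cons _ p _ hxp q =>
    refine ⟨p, hxp, ?_⟩
    have hq : G.dist p y ≤ q.length := dist_le q
    have hxpy : G.dist x y ≤ G.dist x p + G.dist p y := hG.dist_triangle
    rw [dist_eq_one_iff_adj.mpr hxp] at hxpy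
    rw [Walk.length_cons] at hw
    rw [dist_comm, dist_comm (u := y)]
    omega

/-- Climbing from `x` past `y`: a vertex of maximal distance from `x` among those with `y` on a
geodesic from `x` is maximally distant from `x`. -/
lemma exists_maxDistant_dist_eq_add [Finite V] (hG : G.Connected) (x y : V) :
    ∃ u, MaxDistant G u x ∧ G.dist x u = G.dist x y + G.dist y u := by
  obtain ⟨u, hu, hmax⟩ := Set.exists_max_image {u | G.dist x u = G.dist x y + G.dist y u}
    (G.dist x) (Set.toFinite _) ⟨y, by simp⟩
  refine ⟨u, fun w huw => ?_, hu⟩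
  have hxw : G.dist x w ≤ G.dist x u + G.dist u w := hG.dist_triangle
  have hyw : G.dist y w ≤ G.dist y u + G.dist u w := hG.dist_triangle
  have hxyw : G.dist x w ≤ G.dist x y + G.dist y w := hG.dist_triangle
  rw [dist_eq_one_iff_adj.mpr huw] at hxw hyw
  rw [dist_comm (u := u)]
  by_contra! hlt
  have hw : G.dist x w = G.dist x y + G.dist y w := by
    change G.dist x u = G.dist x y + G.dist y u at hu
    omega
  exact absurd (hmax w hw) (by omega)

lemma MaxDistant.mem_boundary [Finite V] (hG : G.Connected) {u x : V} (h : MaxDistant G u x) :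
    u ∈ boundary G := by
  obtain ⟨x', hx', hd⟩ := exists_maxDistant_dist_eq_add hG u x
  refine ⟨x', fun w huw => ?_, hx'⟩
  have hx'w : G.dist x' w ≤ G.dist x' x + G.dist x w := hG.dist_triangle
  have hxw := h w huw
  have hcomm : G.dist x' x = G.dist x x' := dist_comm
  omega

lemma boundary_nonempty [Finite V] (hG : G.Connected) : (boundary G).Nonempty := by
  obtain ⟨x⟩ := hG.nonempty
  obtain ⟨u, hu, -⟩ := exists_maxDistant_dist_eq_add hG x x
  exact ⟨u, hu.mem_boundary hG⟩

lemma exists_mem_boundary_ne [Finite V] [Nontrivial V] (hG : G.Connected) (v : V) :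
    ∃ u ∈ boundary G, u ≠ v := by
  obtain ⟨x, hxv⟩ := exists_ne v
  obtain ⟨u, hu, hd⟩ := exists_maxDistant_dist_eq_add hG v x
  refine ⟨u, hu.mem_boundary hG, ?_⟩
  rintro rfl
  have hux : G.dist u x = 0 := by rw [dist_self] at hd; omega
  exact hxv ((hG.dist_eq_zero_iff.mp hux).symm)

lemma Simplicial.maxDistant (hG : G.Connected) {u : V} (hs : Simplicial G u) {y : V}
    (hy : y ≠ u) : MaxDistant G u y := by
  intro w huw
  obtain ⟨p, hup, hpd⟩ := exists_adj_dist_add_one_eq hG hy.symm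
  rw [dist_comm (u := u)]
  rcases eq_or_ne p w with rfl | hpw
  · omega
  · have hywp : G.dist y w ≤ G.dist y p + G.dist p w := hG.dist_triangle
    rw [dist_eq_one_iff_adj.mpr (hs p hup w huw hpw)] at hywp
    omega

lemma MaxDistant.eq_of_dist_eq_add (hG : G.Connected) {u v w : V} (h : MaxDistant G v u)
    (hw : G.dist w u = G.dist w v + G.dist v u) : w = v := by
  by_contra hwv
  obtain ⟨p, hvp, hpd⟩ := exists_adj_dist_add_one_eq hG (Ne.symm hwv)
  have hup := h p hvp
  have hwu : G.dist w u ≤ G.dist w p + G.dist p u := hG.dist_triangle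
  rw [dist_comm (u := u)] at hup
  omega

lemma MMD.eq_or_eq_of_stronglyResolves (hG : G.Connected) {u v w : V} (h : MMD G u v)
    (hr : StronglyResolves G w u v) : w = u ∨ w = v :=
  hr.elim (fun hw => Or.inr (h.2.eq_of_dist_eq_add hG hw))
    (fun hw => Or.inl (h.1.eq_of_dist_eq_add hG hw))

lemma exists_mem_boundary_ne_stronglyResolves [Finite V] (hG : G.Connected) {u v : V}
    (huv : u ≠ v) (t : V) : ∃ w ∈ boundary G, w ≠ t ∧ StronglyResolves G w u v := by
  obtain ⟨w₁, hw₁, hd₁⟩ := exists_maxDistant_dist_eq_add hG u v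
  obtain ⟨w₂, hw₂, hd₂⟩ := exists_maxDistant_dist_eq_add hG v u
  have hpos : 0 < G.dist u v := hG.pos_dist_of_ne huv
  have hcomm : G.dist v u = G.dist u v := dist_comm
  have hr₁ : StronglyResolves G w₁ u v := Or.inl (by rw [dist_comm, dist_comm (u := w₁)]; omega)
  have hr₂ : StronglyResolves G w₂ u v := Or.inr (by rw [dist_comm, dist_comm (u := w₂)]; omega)
  have hne : w₁ ≠ w₂ := by
    rintro rfl
    omega
  by_cases hw₁t : w₁ = t
  · exact ⟨w₂, hw₂.mem_boundary hG, hw₁t ▸ hne.symm, hr₂⟩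
  · exact ⟨w₁, hw₁.mem_boundary hG, hw₁t, hr₁⟩

lemma isStrongGenerator_boundary_diff_singleton [Finite V] (hG : G.Connected) (t : V) :
    IsStrongGenerator G (boundary G \ {t}) := fun _ _ huv =>
  let ⟨w, hw, hwt, hr⟩ := exists_mem_boundary_ne_stronglyResolves hG huv t
  ⟨w, ⟨hw, hwt⟩, hr⟩

lemma ncard_sub_one_le_of_pairwise_mmd [Finite V] (hG : G.Connected) {S W : Set V}
    (hS : S.Pairwise (MMD G)) (hW : IsStrongGenerator G W) : S.ncard - 1 ≤ W.ncard := by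
  have hmissed : (S \ W).ncard ≤ 1 := by
    refine (Set.ncard_le_one_iff).2 fun {p q} hp hq => ?_
    by_contra hpq
    obtain ⟨w, hw, hr⟩ := hW p q hpq
    rcases (hS hp.1 hq.1 hpq).eq_or_eq_of_stronglyResolves hG hr with rfl | rfl
    exacts [hp.2 hw, hq.2 hw]
  have := Set.ncard_le_ncard_sdiff_add_ncard S W
  omega

variable [Fintype V]

lemma sdim_le_ncard {S : Set V} (hS : IsStrongGenerator G S) : sdim G ≤ S.ncard :=
  Nat.sInf_le ⟨S.toFinite.toFinset, (Set.ncard_eq_toFinset_card S).symm, by simpa using hS⟩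

lemma exists_isStrongGenerator_ncard_eq_sdim {S : Set V} (hS : IsStrongGenerator G S) :
    ∃ W : Set V, W.ncard = sdim G ∧ IsStrongGenerator G W := by
  obtain ⟨W, hcard, hW⟩ := Nat.sInf_mem (s := {n | ∃ S : Finset V, S.card = n ∧
    IsStrongGenerator G (S : Set V)}) ⟨_, S.toFinite.toFinset, rfl, by simpa using hS⟩
  exact ⟨W, by rw [Set.ncard_coe_finset, hcard, sdim], hW⟩

theorem sdim_eq_ncard_boundary_sub_one (hG : G.Connected)
    (hσ : boundary G ⊆ simplicialSet G) : sdim G = (boundary G).ncard - 1 := by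
  obtain ⟨t, ht⟩ := boundary_nonempty hG
  have hgen := isStrongGenerator_boundary_diff_singleton hG t
  refine le_antisymm ?_ ?_
  · simpa [Set.ncard_sdiff_singleton_of_mem ht] using sdim_le_ncard hgen
  · obtain ⟨W, hW, hWgen⟩ := exists_isStrongGenerator_ncard_eq_sdim hgen
    have hmmd : (boundary G).Pairwise (MMD G) := fun p hp q hq hpq =>
      ⟨(hσ hp).maxDistant hG hpq.symm, (hσ hq).maxDistant hG hpq⟩
    simpa [hW] using ncard_sub_one_le_of_pairwise_mmd hG hmmd hWgen

end Boundary

section RootedProduct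

variable {α β : Type*} {G : SimpleGraph α} {H : SimpleGraph β} {v : β}

lemma exists_walk_length_eq_of_fiber (a : α) {x y : β} (w : H.Walk x y) :
    ∃ w' : (rootedProd G H v).Walk (a, x) (a, y), w'.length = w.length :=
  ⟨w.map ⟨fun y => (a, y), fun h => Or.inl ⟨rfl, h⟩⟩, w.length_map _⟩

lemma exists_walk_length_eq_of_root {a b : α} (w : G.Walk a b) :
    ∃ w' : (rootedProd G H v).Walk (a, v) (b, v), w'.length = w.length :=
  ⟨w.map ⟨fun c => (c, v), fun h => Or.inr ⟨rfl, rfl, h⟩⟩, w.length_map _⟩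

open scoped Classical in
/-- Shortest paths between different copies of `H` in `G ∘_v H` run through both roots. -/
noncomputable def rootedProdDist (G : SimpleGraph α) (H : SimpleGraph β) (v : β)
    (p q : α × β) : ℕ :=
  if p.1 = q.1 then H.dist p.2 q.2 else H.dist p.2 v + G.dist p.1 q.1 + H.dist v q.2

lemma rootedProdDist_root (a c : α) (x : β) :
    rootedProdDist G H v (a, x) (c, v) = H.dist x v + G.dist a c := by
  by_cases hac : a = c <;> simp [rootedProdDist, hac]

lemma exists_walk_length_eq_rootedProdDist (hG : G.Connected) (hH : H.Connected)
    (p q : α × β) : ∃ w : (rootedProd G H v).Walk p q, w.length = rootedProdDist G H v p q := by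
  obtain ⟨a, x⟩ := p
  obtain ⟨b, y⟩ := q
  by_cases hab : a = b
  · subst hab
    obtain ⟨w, hw⟩ := hH.exists_walk_length_eq_dist x y
    obtain ⟨w', hw'⟩ := exists_walk_length_eq_of_fiber (G := G) (v := v) a w
    exact ⟨w', by simp [rootedProdDist, hw', hw]⟩
  · obtain ⟨w₁, hw₁⟩ := hH.exists_walk_length_eq_dist x v
    obtain ⟨w₂, hw₂⟩ := hG.exists_walk_length_eq_dist a b
    obtain ⟨w₃, hw₃⟩ := hH.exists_walk_length_eq_dist v y
    obtain ⟨w₁', hw₁'⟩ := exists_walk_length_eq_of_fiber (G := G) (v := v) a w₁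
    obtain ⟨w₂', hw₂'⟩ := exists_walk_length_eq_of_root (H := H) (v := v) w₂
    obtain ⟨w₃', hw₃'⟩ := exists_walk_length_eq_of_fiber (G := G) (v := v) b w₃
    exact ⟨(w₁'.append w₂').append w₃',
      by simp [rootedProdDist, hab, hw₁, hw₂, hw₃, hw₁', hw₂', hw₃']⟩

lemma le_add_length_of_adj_le_add_one {W : Type*} {K : SimpleGraph W} (f : W → ℕ)
    (hf : ∀ a b, K.Adj a b → f b ≤ f a + 1) {p q : W} (w : K.Walk p q) :
    f q ≤ f p + w.length := by
  induction w with
  | nil => simp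
  | cons h w ih =>
    have := hf _ _ h
    rw [Walk.length_cons]
    omega

lemma rootedProdDist_le_of_adj (hG : G.Connected) (hH : H.Connected) (p : α × β)
    {q q' : α × β} (h : (rootedProd G H v).Adj q q') :
    rootedProdDist G H v p q' ≤ rootedProdDist G H v p q + 1 := by
  obtain ⟨a, x⟩ := p
  rcases h with ⟨hfst, hadj⟩ | ⟨hq, hq', hadj⟩
  · obtain ⟨c, z⟩ := q
    obtain ⟨c', z'⟩ := q'
    dsimp only at hfst hadj
    subst hfst
    have hzz' := dist_eq_one_iff_adj.mpr hadj
    by_cases hac : a = c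
    · have : H.dist x z' ≤ H.dist x z + H.dist z z' := hH.dist_triangle
      simp only [rootedProdDist, hac, if_true]
      omega
    · have : H.dist v z' ≤ H.dist v z + H.dist z z' := hH.dist_triangle
      simp only [rootedProdDist, hac, if_false]
      omega
  · obtain ⟨c, z⟩ := q
    obtain ⟨c', z'⟩ := q'
    dsimp only at hq hq' hadj
    rw [hq, hq', rootedProdDist_root, rootedProdDist_root]
    have hcc' := dist_eq_one_iff_adj.mpr hadj
    have : G.dist a c' ≤ G.dist a c + G.dist c c' := hG.dist_triangle
    omega

lemma rootedProd_connected (hG : G.Connected) (hH : H.Connected) :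
    (rootedProd G H v).Connected := by
  have : Nonempty (α × β) := ⟨(hG.nonempty.some, hH.nonempty.some)⟩
  exact ⟨fun p q => ⟨(exists_walk_length_eq_rootedProdDist hG hH p q).choose⟩⟩

theorem rootedProd_dist (hG : G.Connected) (hH : H.Connected) (p q : α × β) :
    (rootedProd G H v).dist p q = rootedProdDist G H v p q := by
  refine le_antisymm ?_ ?_
  · obtain ⟨w, hw⟩ := exists_walk_length_eq_rootedProdDist hG hH p q
    exact hw ▸ dist_le w
  · obtain ⟨w, hw⟩ := (rootedProd_connected hG hH).exists_walk_length_eq_dist p q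
    have := le_add_length_of_adj_le_add_one _ (fun _ _ => rootedProdDist_le_of_adj hG hH p) w
    simpa [rootedProdDist, hw] using this

lemma exists_rootedProd_dist_eq_add (hG : G.Connected) (hH : H.Connected) (q : α × β) (a : α) :
    ∃ z c, ∀ y, (rootedProd G H v).dist q (a, y) = c + H.dist z y := by
  obtain ⟨b, z⟩ := q
  by_cases hba : b = a
  · exact ⟨z, 0, fun y => by simp [rootedProd_dist hG hH, rootedProdDist, hba]⟩
  · exact ⟨v, H.dist z v + G.dist b a,
      fun y => by simp [rootedProd_dist hG hH, rootedProdDist, hba]⟩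

lemma MaxDistant.exists_maxDistant_snd (hG : G.Connected) (hH : H.Connected) {a : α} {x : β}
    {q : α × β} (h : MaxDistant (rootedProd G H v) (a, x) q) : ∃ z, MaxDistant H x z := by
  obtain ⟨z, c, hd⟩ := exists_rootedProd_dist_eq_add hG hH q a
  refine ⟨z, fun y hxy => ?_⟩
  have := h (a, y) (Or.inl ⟨rfl, hxy⟩)
  rw [dist_comm (u := (a, x)), hd, hd] at this
  rw [dist_comm (u := x)]
  omega

lemma MaxDistant.snd_ne_root [Nontrivial α] [Nontrivial β] (hG : G.Connected) (hH : H.Connected)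
    {a : α} {x : β} {q : α × β} (h : MaxDistant (rootedProd G H v) (a, x) q) : x ≠ v := by
  intro hxv
  rw [hxv] at h
  obtain ⟨b, z⟩ := q
  by_cases hab : a = b
  · obtain ⟨c, hac⟩ := hG.preconnected.exists_adj_of_nontrivial a
    have := h (c, v) (Or.inr ⟨rfl, rfl, hac⟩)
    rw [rootedProd_dist hG hH, rootedProd_dist hG hH, ← hab, rootedProdDist_root,
      dist_eq_one_iff_adj.mpr hac] at this
    simp only [rootedProdDist, if_true] at this
    rw [dist_comm (u := v)] at this
    omega
  · obtain ⟨y, hvy⟩ := hH.preconnected.exists_adj_of_nontrivial v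
    have := h (a, y) (Or.inl ⟨rfl, hvy⟩)
    simp only [rootedProd_dist hG hH, rootedProdDist, hab, Ne.symm hab, if_false, dist_self,
      dist_eq_one_iff_adj.mpr hvy] at this
    rw [dist_comm (u := v), dist_comm (u := a)] at this
    omega

lemma Simplicial.rootedProd {x : β} (hx : Simplicial H x) (hxv : x ≠ v) (a : α) :
    Simplicial (rootedProd G H v) (a, x) := by
  rintro ⟨c, z⟩ (⟨rfl, hxz⟩ | ⟨hxv', -⟩) ⟨c', z'⟩ (⟨rfl, hxz'⟩ | ⟨hxv', -⟩) hne
  · exact Or.inl ⟨rfl, hx z hxz z' hxz' fun h => hne (h ▸ rfl)⟩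
  all_goals exact absurd hxv' hxv

lemma boundary_rootedProd [Finite α] [Finite β] [Nontrivial α] [Nontrivial β]
    (hG : G.Connected) (hH : H.Connected) (hσ : boundary H ⊆ simplicialSet H) :
    boundary (rootedProd G H v) = Set.univ ×ˢ (boundary H \ {v}) := by
  have hP := rootedProd_connected (v := v) hG hH
  ext ⟨a, x⟩
  constructor
  · rintro ⟨q, hq, -⟩
    obtain ⟨z, hz⟩ := hq.exists_maxDistant_snd hG hH
    exact ⟨trivial, hz.mem_boundary hH, hq.snd_ne_root hG hH⟩
  · rintro ⟨-, hx, hxv⟩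
    obtain ⟨q, hq⟩ := exists_ne (a, x)
    exact (((hσ hx).rootedProd hxv a).maxDistant hP hq).mem_boundary hP

theorem sdim_rootedProd [Fintype α] [Fintype β] [Nontrivial α] [Nontrivial β]
    (hG : G.Connected) (hH : H.Connected) (hσ : boundary H ⊆ simplicialSet H) :
    (sdim (rootedProd G H v) : ℤ) = Fintype.card α * (boundary H \ {v}).ncard - 1 := by
  have hbd := boundary_rootedProd (v := v) hG hH hσ
  have hsimp : boundary (rootedProd G H v) ⊆ simplicialSet (rootedProd G H v) := by
    rw [hbd]
    rintro ⟨a, x⟩ ⟨-, hx, hxv⟩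
    exact (hσ hx).rootedProd hxv a
  obtain ⟨u, hu, huv⟩ := exists_mem_boundary_ne hH v
  have hpos : 1 ≤ Fintype.card α * (boundary H \ {v}).ncard :=
    Nat.mul_pos Fintype.card_pos ((Set.ncard_pos).2 ⟨u, hu, huv⟩)
  rw [sdim_eq_ncard_boundary_sub_one (rootedProd_connected hG hH) hsimp, hbd, Set.ncard_prod,
    Set.ncard_univ, Nat.card_eq_fintype_card, Nat.cast_sub hpos]
  push_cast
  rfl

end RootedProduct

theorem statement5 {α β : Type*} [Fintype α] [Fintype β]
    (G : SimpleGraph α) (H : SimpleGraph β)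
    (hG : G.Connected) (hH : H.Connected)
    {n : ℕ} (hn : Fintype.card α = n) (h2 : 2 ≤ n) (hHn : 2 ≤ Fintype.card β)
    (hbs : boundary H = simplicialSet H) (v : β) :
    (v ∈ boundary H →
      (sdim (rootedProd G H v) : ℤ) = n * (((boundary H).ncard : ℤ) - 1) - 1) ∧
    (v ∉ boundary H →
      (sdim (rootedProd G H v) : ℤ) = n * ((boundary H).ncard : ℤ) - 1) := by
  subst hn
  have : Nontrivial α := Fintype.one_lt_card_iff_nontrivial.mp h2
  have : Nontrivial β := Fintype.one_lt_card_iff_nontrivial.mp hHn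
  have hsdim := sdim_rootedProd (v := v) hG hH hbs.subset
  refine ⟨fun hv => ?_, fun hv => ?_⟩
  · rw [hsdim, Set.ncard_sdiff_singleton_of_mem hv, Nat.cast_sub ((Set.ncard_pos).2 ⟨v, hv⟩)]
    push_cast
    rfl
  · rw [hsdim, Set.sdiff_singleton_eq_self hv]

end RootedStrong
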